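/- (Theorem 2.4, forcing inequality for the EM iteration.) Let 0 < ε < 1, t > 0, and let P^1,…,P^N be row-stochastic h×h matrices. For a generator matrix Q with (exp(tQ))_{sr} > 0 whenever P^u_{sr} > 0, define Ĵ_{ij}(Q) = ∑_{u=1}^N ∑_{s,r : P^u_{sr}>0} P^u_{sr}·(exp(t·C_γ^{(ij)}(Q)))_{s,h+r}/(exp(tQ))_{sr}, Ŝ_i(Q) = ∑_{u=1}^N ∑_{s,r : P^u_{sr}>0} P^u_{sr}·(exp(t·C_φ^{(i)}(Q)))_{s,h+r}/(exp(tQ))_{sr}, and R(Q';Q) = ∑_{i≠j, q'_{ij}>0} [log(q'_{ij})·Ĵ_{ij}(Q) − q'_{ij}·Ŝ_i(Q)]. Let (Q^{(k)})_{k∈ℕ} be a sequence of generator matrices all lying in Λ_ε and all satisfying the assumed well-specification condition, such that Q^{(k+1)} is the EM update of Q^{(k)}: for all i ≠ j, if q^{(k)}_{ij} > 0 then q^{(k+1)}_{ij} = Ĵ_{ij}(Q^{(k)})/Ŝ_i(Q^{(k)}), and if q^{(0)}_{ij} = 0 then q^{(k)}_{ij} = 0 for all k. Assume moreover that for every pair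 i ≠ j with q^{(0)}_{ij} > 0 there exists u with P^u_{ij} > 0, and for every i ≠ h there exists u with P^u_{ii} > 0. Then there exists λ > 0 such that for every k ∈ ℕ: R(Q^{(k+1)}; Q^{(k)}) − R(Q^{(k)}; Q^{(k)}) ≥ λ · ‖Q^{(k+1)} − Q^{(k)}‖², where ‖·‖ is the Euclidean (Frobenius) norm on h×h matrices. -/

import Mathlib

set_option autoImplicit false
set_option maxHeartbeats 1000000
set_option linter.unusedSectionVars false

open Matrix

/-- The matrix exponential of a real square matrix. -/
noncomputable def mexp {n : Type*} [Fintype n] [DecidableEq n] (A : Matrix n n ℝ) :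
    Matrix n n ℝ :=
  NormedSpace.exp A

/-- `Q` is a generator matrix: off-diagonal entries nonnegative, diagonal entries
nonpositive, rows summing to zero. -/
def IsGenerator {h : ℕ} (Q : Matrix (Fin h) (Fin h) ℝ) : Prop :=
  (∀ i j, i ≠ j → 0 ≤ Q i j) ∧ (∀ i, Q i i ≤ 0) ∧ (∀ i, ∑ j, Q i j = 0)

/-- `Q ∈ Λ_ε`: a generator matrix with `q_{ij} < 1/ε` off the diagonal, adjacent mixing
`q_{i,i+1} > ε` and `q_{i,i-1} > ε` for the interior states `i ∈ {2,…,h-1}`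
(1-based; 0-based indices `k ∈ {1,…,h-2}`), and `q_{1,2} > ε`. -/
def InLambda {h : ℕ} (ε : ℝ) (Q : Matrix (Fin h) (Fin h) ℝ) : Prop :=
  IsGenerator Q ∧
    (∀ i j, i ≠ j → Q i j < 1 / ε) ∧
    (∀ (k : ℕ) (hk1 : 1 ≤ k) (hk2 : k + 2 ≤ h),
      ε < Q ⟨k, by omega⟩ ⟨k + 1, by omega⟩ ∧ ε < Q ⟨k, by omega⟩ ⟨k - 1, by omega⟩) ∧
    (∀ hh : 2 ≤ h, ε < Q ⟨0, by omega⟩ ⟨1, by omega⟩)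

/-- `P` is a row-stochastic matrix. -/
def IsStochastic {h : ℕ} (P : Matrix (Fin h) (Fin h) ℝ) : Prop :=
  (∀ s r, 0 ≤ P s r) ∧ (∀ s, ∑ r, P s r = 1)

/-- `C_γ^{(ij)}(Q) = [[Q, q_{ij} • E_{ij}],[0, Q]]`. -/
noncomputable def Cγ {h : ℕ} (i j : Fin h) (Q : Matrix (Fin h) (Fin h) ℝ) :
    Matrix (Fin h ⊕ Fin h) (Fin h ⊕ Fin h) ℝ :=
  Matrix.fromBlocks Q (Q i j • Matrix.single i j 1) 0 Q

/-- `C_φ^{(i)}(Q) = [[Q, E_{ii}],[0, Q]]`. -/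
noncomputable def Cφ {h : ℕ} (i : Fin h) (Q : Matrix (Fin h) (Fin h) ℝ) :
    Matrix (Fin h ⊕ Fin h) (Fin h ⊕ Fin h) ℝ :=
  Matrix.fromBlocks Q (Matrix.single i i 1) 0 Q

/-- Closed-form conditional expected number of jumps from `i` to `j`, given the observed
TPMs `P^1, …, P^N` over observation windows of length `t`.  (Terms with `P^u_{sr} = 0`
vanish, so the sum may be taken over all pairs `(s, r)`.) -/
noncomputable def Jhat {h N : ℕ} (P : Fin N → Matrix (Fin h) (Fin h) ℝ) (t : ℝ)
    (Q : Matrix (Fin h) (Fin h) ℝ) (i j : Fin h) : ℝ :=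
  ∑ u, ∑ s, ∑ r,
    P u s r * mexp (t • Cγ i j Q) (Sum.inl s) (Sum.inr r) / mexp (t • Q) s r

/-- Closed-form conditional expected holding time in state `i`, given the observed TPMs
`P^1, …, P^N` over observation windows of length `t`. -/
noncomputable def Shat {h N : ℕ} (P : Fin N → Matrix (Fin h) (Fin h) ℝ) (t : ℝ)
    (Q : Matrix (Fin h) (Fin h) ℝ) (i : Fin h) : ℝ :=
  ∑ u, ∑ s, ∑ r,
    P u s r * mexp (t • Cφ i Q) (Sum.inl s) (Sum.inr r) / mexp (t • Q) s r

/-- The EM objective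
`R(Q';Q) = ∑_{i ≠ j, q'_{ij} > 0} (log q'_{ij} · Ĵ_{ij}(Q) − q'_{ij} · Ŝ_i(Q))`. -/
noncomputable def Rfun {h N : ℕ} (P : Fin N → Matrix (Fin h) (Fin h) ℝ) (t : ℝ)
    (Q' Q : Matrix (Fin h) (Fin h) ℝ) : ℝ :=
  ∑ i, ∑ j,
    if i ≠ j ∧ 0 < Q' i j then
      Real.log (Q' i j) * Jhat P t Q i j - Q' i j * Shat P t Q i
    else 0

namespace EMAux

open Finset

variable {n : Type*} [Fintype n] [DecidableEq n]

lemma entry_abs_pow_le (M : Matrix n n ℝ) (k : ℕ) (i j : n) :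
    |(M ^ k) i j| ≤ (1 + ∑ a, ∑ b, |M a b|) ^ k := by
  induction k generalizing i j with
  | zero =>
    simp only [pow_zero, Matrix.one_apply]
    split <;> simp
  | succ k ih =>
    rw [pow_succ', Matrix.mul_apply]
    calc |∑ m, M i m * (M ^ k) m j| ≤ ∑ m, |M i m * (M ^ k) m j| :=
          Finset.abs_sum_le_sum_abs _ _
    _ ≤ ∑ m, |M i m| * (1 + ∑ a, ∑ b, |M a b|) ^ k := by
        refine Finset.sum_le_sum fun m _ => ?_
        rw [abs_mul]
        exact mul_le_mul_of_nonneg_left (ih m j) (abs_nonneg _)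
    _ = (∑ m, |M i m|) * (1 + ∑ a, ∑ b, |M a b|) ^ k := by rw [Finset.sum_mul]
    _ ≤ (1 + ∑ a, ∑ b, |M a b|) * (1 + ∑ a, ∑ b, |M a b|) ^ k := by
        refine mul_le_mul_of_nonneg_right ?_ (by positivity)
        have h1 : ∑ m, |M i m| ≤ ∑ a, ∑ b, |M a b| :=
          Finset.single_le_sum (f := fun a => ∑ b, |M a b|)
            (fun a _ => by positivity) (Finset.mem_univ i)
        linarith
    _ = _ := by rw [← pow_succ']

lemma summable_entry (M : Matrix n n ℝ) (i j : n) :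
    Summable (fun k : ℕ => ((k.factorial : ℝ))⁻¹ * (M ^ k) i j) := by
  apply Summable.of_abs
  refine Summable.of_nonneg_of_le (fun k => abs_nonneg _) (fun k => ?_)
    (Real.summable_pow_div_factorial (1 + ∑ a, ∑ b, |M a b|))
  rw [abs_mul, abs_inv, abs_of_nonneg (by positivity : (0:ℝ) ≤ (k.factorial : ℝ)),
    div_eq_inv_mul]
  exact mul_le_mul_of_nonneg_left (entry_abs_pow_le M k i j) (by positivity)

lemma summable_matrixexp (M : Matrix n n ℝ) :
    Summable (fun k : ℕ => ((k.factorial : ℝ))⁻¹ • M ^ k) := by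
  apply Pi.summable.mpr
  intro i
  apply Pi.summable.mpr
  intro j
  exact summable_entry M i j

lemma mexp_apply (M : Matrix n n ℝ) (i j : n) :
    mexp M i j = ∑' k : ℕ, ((k.factorial : ℝ))⁻¹ * (M ^ k) i j := by
  rw [mexp, NormedSpace.exp_eq_tsum ℝ]
  show (∑' k : ℕ, ((k.factorial : ℝ))⁻¹ • M ^ k) i j = _
  erw [tsum_apply (summable_matrixexp M), tsum_apply (Pi.summable.mp (summable_matrixexp M) i)]
  rfl

end EMAux

namespace EMAux2
open Finset
variable {n : Type*} [Fintype n] [DecidableEq n]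
open EMAux

lemma smul_one_diag (y : ℝ) : y • (1 : Matrix n n ℝ) = Matrix.diagonal (fun _ => y) := by
  ext i j
  by_cases h : i = j <;> simp [Matrix.one_apply, Matrix.diagonal, h]

lemma mexp_shift (X : Matrix n n ℝ) (y : ℝ) (i j : n) :
    mexp X i j = Real.exp (-y) * mexp (X + y • 1) i j := by
  have hcomm : Commute X (y • (1 : Matrix n n ℝ)) := (Commute.one_right X).smul_right y
  have h1 : mexp (X + y • 1) = mexp X * mexp (y • 1) := by
    rw [mexp, mexp, mexp]
    exact Matrix.exp_add_of_commute X (y • 1) hcomm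
  have h2 : mexp (y • (1 : Matrix n n ℝ)) = Matrix.diagonal (fun _ => Real.exp y) := by
    rw [smul_one_diag, mexp, Matrix.exp_diagonal, Pi.exp_def]
    congr 1
    funext _
    rw [← Real.exp_eq_exp_ℝ]
  rw [h1, h2, Matrix.mul_diagonal, Real.exp_neg]
  field_simp

lemma rowsum_pow (M : Matrix n n ℝ) (C : ℝ) (hM : ∀ i, ∑ j, M i j = C) (k : ℕ) (i : n) :
    ∑ j, (M ^ k) i j = C ^ k := by
  induction k generalizing i with
  | zero => simp [Matrix.one_apply]
  | succ k ih =>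
    rw [pow_succ']
    simp only [Matrix.mul_apply]
    rw [Finset.sum_comm]
    calc ∑ m, ∑ j, M i m * (M ^ k) m j = ∑ m, M i m * C ^ k := by
          refine Finset.sum_congr rfl fun m _ => ?_
          rw [← Finset.mul_sum, ih m]
    _ = C ^ (k + 1) := by rw [← Finset.sum_mul, hM i, ← pow_succ']

lemma mexp_rowsum_one (M : Matrix n n ℝ) (hM : ∀ i, ∑ j, M i j = 0) (i : n) :
    ∑ j, mexp M i j = 1 := by
  have h1 : ∀ j : n, mexp M i j = ∑' k : ℕ, ((k.factorial : ℝ))⁻¹ * (M ^ k) i j :=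
    fun j => mexp_apply M i j
  simp_rw [h1]
  rw [← Summable.tsum_finsetSum (fun j _ => summable_entry M i j)]
  have h2 : ∀ k : ℕ, (∑ j, ((k.factorial : ℝ))⁻¹ * (M ^ k) i j) = if k = 0 then 1 else 0 := by
    intro k
    rw [← Finset.mul_sum, rowsum_pow M 0 hM k i]
    cases k with
    | zero => simp
    | succ k => simp
  calc ∑' k : ℕ, ∑ j, ((k.factorial : ℝ))⁻¹ * (M ^ k) i j
      = ∑' k : ℕ, if k = 0 then (1:ℝ) else 0 := tsum_congr h2
  _ = 1 := by rw [tsum_eq_single 0 (fun b hb => by simp [hb])]; simp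

lemma pow_entry_nonneg (M : Matrix n n ℝ) (hM : ∀ i j, 0 ≤ M i j) (k : ℕ) (i j : n) :
    0 ≤ (M ^ k) i j := by
  induction k generalizing i j with
  | zero =>
    simp only [pow_zero, Matrix.one_apply]
    split <;> norm_num
  | succ k ih =>
    rw [pow_succ', Matrix.mul_apply]
    exact Finset.sum_nonneg fun m _ => mul_nonneg (hM i m) (ih m j)

lemma mexp_entry_nonneg (M : Matrix n n ℝ) (hM : ∀ i j, 0 ≤ M i j) (i j : n) :
    0 ≤ mexp M i j := by
  rw [mexp_apply]
  exact tsum_nonneg fun k => mul_nonneg (by positivity) (pow_entry_nonneg M hM k i j)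

lemma partial_le_mexp (M : Matrix n n ℝ) (hM : ∀ i j, 0 ≤ M i j) (F : Finset ℕ) (i j : n) :
    ∑ k ∈ F, ((k.factorial : ℝ))⁻¹ * (M ^ k) i j ≤ mexp M i j := by
  rw [mexp_apply]
  exact Summable.sum_le_tsum F (fun k _ => mul_nonneg (by positivity) (pow_entry_nonneg M hM k i j))
    (summable_entry M i j)

lemma pow_add_entry_ge (M : Matrix n n ℝ) (hM : ∀ i j, 0 ≤ M i j) (a b : ℕ) (i m j : n) :
    (M ^ a) i m * (M ^ b) m j ≤ (M ^ (a + b)) i j := by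
  rw [pow_add, Matrix.mul_apply]
  exact Finset.single_le_sum
    (fun p _ => mul_nonneg (pow_entry_nonneg M hM a i p) (pow_entry_nonneg M hM b p j))
    (Finset.mem_univ m)

lemma pow_succ_entry_ge (M : Matrix n n ℝ) (hM : ∀ i j, 0 ≤ M i j) (d : ℕ) (i m j : n) :
    M i m * (M ^ d) m j ≤ (M ^ (d + 1)) i j := by
  rw [pow_succ', Matrix.mul_apply]
  exact Finset.single_le_sum
    (fun p _ => mul_nonneg (hM i p) (pow_entry_nonneg M hM d p j)) (Finset.mem_univ m)

lemma pow_entry_le_rowsum (M : Matrix n n ℝ) (C : ℝ) (hM0 : ∀ i j, 0 ≤ M i j)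
    (hM : ∀ i, ∑ j, M i j = C) (k : ℕ) (i j : n) : (M ^ k) i j ≤ C ^ k := by
  rw [← rowsum_pow M C hM k i]
  exact Finset.single_le_sum (fun p _ => pow_entry_nonneg M hM0 k i p) (Finset.mem_univ j)

lemma mul_stdBasisMatrix_mul (X Y : Matrix n n ℝ) (a b : n) (β : ℝ) (s r : n) :
    (X * Matrix.single a b β * Y) s r = X s a * β * Y b r := by
  rw [Matrix.mul_apply]
  rw [Finset.sum_eq_single b]
  · rw [Matrix.mul_single_apply_same]
  · intro p _ hp
    simp [hp]
  · intro hb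
    exact absurd (Finset.mem_univ b) hb

end EMAux2

namespace EMBlock
open Finset EMAux EMAux2

variable {n : Type*} [Fintype n] [DecidableEq n]

noncomputable def offU (A B : Matrix n n ℝ) (k : ℕ) : Matrix n n ℝ :=
  ∑ p ∈ Finset.range k, A ^ p * B * A ^ (k - 1 - p)

lemma offU_succ (A B : Matrix n n ℝ) (k : ℕ) :
    offU A B (k + 1) = A * offU A B k + B * A ^ k := by
  rw [offU, Finset.sum_range_succ']
  have h1 : ∀ p, A ^ (p+1) * B * A ^ (k + 1 - 1 - (p+1)) = A * (A ^ p * B * A ^ (k - 1 - p)) := by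
    intro p
    have h2 : k + 1 - 1 - (p + 1) = k - 1 - p := by omega
    rw [pow_succ', h2, mul_assoc, mul_assoc, mul_assoc]
  simp only [h1]
  rw [← Finset.mul_sum, offU]
  simp

lemma fromBlocks_pow (A B : Matrix n n ℝ) (k : ℕ) :
    (Matrix.fromBlocks A B 0 A) ^ k = Matrix.fromBlocks (A ^ k) (offU A B k) 0 (A ^ k) := by
  induction k with
  | zero => simp [offU, Matrix.fromBlocks_one]
  | succ k ih =>
    rw [pow_succ', ih, Matrix.fromBlocks_multiply, offU_succ]
    simp [← pow_succ']

lemma blockpow_apply (A B : Matrix n n ℝ) (k : ℕ) (s r : n) :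
    ((Matrix.fromBlocks A B 0 A) ^ k) (Sum.inl s) (Sum.inr r) = offU A B k s r := by
  rw [fromBlocks_pow]
  rfl

lemma offU_std_apply (A : Matrix n n ℝ) (a b : n) (β : ℝ) (k : ℕ) (s r : n) :
    offU A (Matrix.single a b β) k s r
      = ∑ p ∈ Finset.range k, (A ^ p) s a * β * (A ^ (k - 1 - p)) b r := by
  rw [offU, Matrix.sum_apply]
  exact Finset.sum_congr rfl fun p _ => mul_stdBasisMatrix_mul _ _ _ _ _ _ _

lemma fromBlocks_entry_nonneg {A B : Matrix n n ℝ} (hA : ∀ i j, 0 ≤ A i j)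
    (hB : ∀ i j, 0 ≤ B i j) :
    ∀ x y, 0 ≤ (Matrix.fromBlocks A B 0 A) x y := by
  rintro (x | x) (y | y) <;>
    simp [Matrix.fromBlocks_apply₁₁, Matrix.fromBlocks_apply₁₂,
      Matrix.fromBlocks_apply₂₁, Matrix.fromBlocks_apply₂₂, hA, hB]

lemma mexp_tsmul_apply (t : ℝ) (M : Matrix n n ℝ) (i j : n) :
    mexp (t • M) i j = ∑' k : ℕ, ((k.factorial : ℝ))⁻¹ * (t ^ k * (M ^ k) i j) := by
  rw [mexp_apply]
  refine tsum_congr fun k => ?_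
  rw [smul_pow, Matrix.smul_apply, smul_eq_mul]

lemma summable_tsmul_entry (t : ℝ) (M : Matrix n n ℝ) (i j : n) :
    Summable (fun k : ℕ => ((k.factorial : ℝ))⁻¹ * (t ^ k * (M ^ k) i j)) := by
  have := summable_entry (t • M) i j
  simpa only [smul_pow, Matrix.smul_apply, smul_eq_mul] using this

lemma mexp_block_apply (t : ℝ) (A B : Matrix n n ℝ) (s r : n) :
    mexp (t • Matrix.fromBlocks A B 0 A) (Sum.inl s) (Sum.inr r)
      = ∑' k : ℕ, ((k.factorial : ℝ))⁻¹ * (t ^ k * offU A B k s r) := by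
  rw [mexp_tsmul_apply]
  exact tsum_congr fun k => by rw [blockpow_apply]

end EMBlock


namespace EMLam
open Finset

noncomputable def cc (h : ℕ) (ε : ℝ) : ℝ := ((h : ℝ) - 1) / ε + 1

variable {h : ℕ} {ε : ℝ} {Q : Matrix (Fin h) (Fin h) ℝ}

lemma cc_ge_one (hε0 : 0 < ε) (hh : 1 ≤ h) : 1 ≤ cc h ε := by
  have h1 : (0:ℝ) ≤ ((h:ℝ) - 1) / ε := by
    apply div_nonneg _ hε0.le
    have : (1:ℝ) ≤ (h:ℝ) := by exact_mod_cast hh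
    linarith
  rw [cc]; linarith

lemma cc_pos (hε0 : 0 < ε) (hh : 1 ≤ h) : 0 < cc h ε := lt_of_lt_of_le one_pos (cc_ge_one hε0 hh)

lemma diag_lower (hε0 : 0 < ε) (hQ : InLambda ε Q) (i : Fin h) :
    -(((h:ℝ) - 1) / ε) ≤ Q i i := by
  have hrow := hQ.1.2.2 i
  have hsplit : Q i i + ∑ j ∈ univ.erase i, Q i j = 0 := by
    rw [Finset.add_sum_erase _ _ (Finset.mem_univ i)]; exact hrow
  have hbound : ∑ j ∈ univ.erase i, Q i j ≤ ((h:ℝ) - 1) * (1/ε) := by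
    have hcard : (univ.erase i).card = h - 1 := by
      rw [Finset.card_erase_of_mem (Finset.mem_univ i), Finset.card_univ, Fintype.card_fin]
    calc ∑ j ∈ univ.erase i, Q i j ≤ (univ.erase i).card • (1/ε) := by
          refine Finset.sum_le_card_nsmul _ _ _ fun j hj => ?_
          exact le_of_lt (hQ.2.1 i j (Ne.symm (Finset.mem_erase.mp hj).1))
    _ = ((h:ℝ) - 1) * (1/ε) := by
        rw [hcard, nsmul_eq_mul]
        congr 1
        have h1 : 1 ≤ h := i.pos
        push_cast [Nat.cast_sub h1]
        ring
  have h2 : ((h:ℝ) - 1) / ε = ((h:ℝ) - 1) * (1/ε) := by ring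
  rw [h2]
  linarith

/-- The shifted nonnegative matrix. -/
noncomputable def AM (ε : ℝ) (Q : Matrix (Fin h) (Fin h) ℝ) : Matrix (Fin h) (Fin h) ℝ :=
  Q + cc h ε • (1 : Matrix (Fin h) (Fin h) ℝ)

lemma AM_apply_ne {i j : Fin h} (hij : i ≠ j) : AM ε Q i j = Q i j := by
  simp [AM, Matrix.one_apply, hij]

lemma AM_apply_diag (i : Fin h) : AM ε Q i i = Q i i + cc h ε := by
  simp [AM, Matrix.one_apply]

lemma AM_diag_ge_one (hε0 : 0 < ε) (hQ : InLambda ε Q) (i : Fin h) : 1 ≤ AM ε Q i i := by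
  rw [AM_apply_diag, cc]
  have := diag_lower hε0 hQ i
  linarith

lemma AM_nonneg (hε0 : 0 < ε) (hQ : InLambda ε Q) (i j : Fin h) : 0 ≤ AM ε Q i j := by
  by_cases hij : i = j
  · subst hij; linarith [AM_diag_ge_one hε0 hQ i]
  · rw [AM_apply_ne hij]; exact hQ.1.1 i j hij

lemma AM_rowsum (hQ : InLambda ε Q) (i : Fin h) : ∑ j, AM ε Q i j = cc h ε := by
  simp only [AM, Matrix.add_apply, Finset.sum_add_distrib, hQ.1.2.2 i, Matrix.smul_apply,
    Matrix.one_apply, smul_eq_mul, mul_ite, mul_one, mul_zero]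
  rw [Finset.sum_ite_eq _ i fun _ => cc h ε]
  simp

lemma up_step (hQ : InLambda ε Q) (m : ℕ) (hm : m + 2 ≤ h) :
    ε ≤ AM ε Q ⟨m, by omega⟩ ⟨m + 1, by omega⟩ := by
  have hne : (⟨m, by omega⟩ : Fin h) ≠ ⟨m + 1, by omega⟩ := by
    simp [Fin.ext_iff]
  rw [AM_apply_ne hne]
  rcases Nat.eq_zero_or_pos m with hm0 | hm1
  · subst hm0
    exact le_of_lt (hQ.2.2.2 (by omega))
  · exact le_of_lt (hQ.2.2.1 m hm1 hm).1

lemma down_step (hQ : InLambda ε Q) (m : ℕ) (h1 : 1 ≤ m) (hm : m + 2 ≤ h) :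
    ε ≤ AM ε Q ⟨m, by omega⟩ ⟨m - 1, by omega⟩ := by
  have hne : (⟨m, by omega⟩ : Fin h) ≠ ⟨m - 1, by omega⟩ := by
    simp [Fin.ext_iff]; omega
  rw [AM_apply_ne hne]
  exact le_of_lt (hQ.2.2.1 m h1 hm).2

end EMLam


namespace EMLam2
open Finset EMAux EMAux2 EMBlock EMLam

variable {h : ℕ} {ε : ℝ} {Q : Matrix (Fin h) (Fin h) ℝ}

lemma finmk {h : ℕ} {a b : ℕ} (pa : a < h) (pb : b < h) (e : a = b) :
    (⟨a, pa⟩ : Fin h) = ⟨b, pb⟩ := by subst e; rfl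

lemma chain_up (hε0 : 0 < ε) (hQ : InLambda ε Q) :
    ∀ (d m : ℕ) (hdm : m + d + 1 ≤ h),
      ε ^ d ≤ (AM ε Q ^ d) ⟨m, by omega⟩ ⟨m + d, by omega⟩ := by
  intro d
  induction d with
  | zero =>
    intro m hdm
    simp [Matrix.one_apply]
  | succ d ih =>
    intro m hdm
    have hstep : ε ≤ AM ε Q ⟨m, by omega⟩ ⟨m + 1, by omega⟩ := up_step hQ m (by omega)
    have hrec := ih (m + 1) (by omega)
    have hmul := pow_succ_entry_ge (AM ε Q) (AM_nonneg hε0 hQ) d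
      ⟨m, by omega⟩ ⟨m + 1, by omega⟩ ⟨m + 1 + d, by omega⟩
    have e2 : (⟨m + 1 + d, by omega⟩ : Fin h) = ⟨m + (d + 1), by omega⟩ :=
      finmk _ _ (by omega)
    rw [e2] at hmul hrec
    calc ε ^ (d + 1) = ε * ε ^ d := by ring
    _ ≤ AM ε Q ⟨m, by omega⟩ ⟨m + 1, by omega⟩ *
        (AM ε Q ^ d) ⟨m + 1, by omega⟩ ⟨m + (d + 1), by omega⟩ :=
      mul_le_mul hstep hrec (pow_nonneg hε0.le d) (le_trans hε0.le hstep)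
    _ ≤ _ := hmul

lemma chain_down (hε0 : 0 < ε) (hQ : InLambda ε Q) :
    ∀ (d m : ℕ) (hd : d ≤ m) (hm : m + 2 ≤ h),
      ε ^ d ≤ (AM ε Q ^ d) ⟨m, by omega⟩ ⟨m - d, by omega⟩ := by
  intro d
  induction d with
  | zero =>
    intro m hd hm
    simp [Matrix.one_apply]
  | succ d ih =>
    intro m hd hm
    have hstep : ε ≤ AM ε Q ⟨m, by omega⟩ ⟨m - 1, by omega⟩ := down_step hQ m (by omega) hm
    have hrec := ih (m - 1) (by omega) (by omega)
    have hmul := pow_succ_entry_ge (AM ε Q) (AM_nonneg hε0 hQ) d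
      ⟨m, by omega⟩ ⟨m - 1, by omega⟩ ⟨m - 1 - d, by omega⟩
    have e2 : (⟨m - 1 - d, by omega⟩ : Fin h) = ⟨m - (d + 1), by omega⟩ :=
      finmk _ _ (by omega)
    rw [e2] at hmul hrec
    calc ε ^ (d + 1) = ε * ε ^ d := by ring
    _ ≤ AM ε Q ⟨m, by omega⟩ ⟨m - 1, by omega⟩ *
        (AM ε Q ^ d) ⟨m - 1, by omega⟩ ⟨m - (d + 1), by omega⟩ :=
      mul_le_mul hstep hrec (pow_nonneg hε0.le d) (le_trans hε0.le hstep)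
    _ ≤ _ := hmul

lemma pow_diag_ge_one (hε0 : 0 < ε) (hQ : InLambda ε Q) (e : ℕ) (r : Fin h) :
    1 ≤ (AM ε Q ^ e) r r := by
  induction e with
  | zero => simp [Matrix.one_apply]
  | succ e ih =>
    have hmul := pow_succ_entry_ge (AM ε Q) (AM_nonneg hε0 hQ) e r r r
    have h1 := AM_diag_ge_one hε0 hQ r
    nlinarith

lemma reach (hε0 : 0 < ε) (hε1 : ε < 1) (hQ : InLambda ε Q) (m r : Fin h)
    (hm : (m : ℕ) + 2 ≤ h) :
    ε ^ (h - 1) ≤ (AM ε Q ^ (h - 1)) m r := by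
  have hmlt : (m : ℕ) < h := m.isLt
  have hrlt : (r : ℕ) < h := r.isLt
  rcases le_or_gt (m : ℕ) (r : ℕ) with hle | hlt
  · set d := (r : ℕ) - (m : ℕ) with hd
    have h1 : ε ^ d ≤ (AM ε Q ^ d) m r := by
      have hc := chain_up hε0 hQ d (m : ℕ) (by omega)
      have em : (⟨(m : ℕ), by omega⟩ : Fin h) = m := by exact finmk _ _ rfl
      have er : (⟨(m : ℕ) + d, by omega⟩ : Fin h) = r := finmk _ _ (by omega)
      rwa [em, er] at hc
    have h2 := pow_add_entry_ge (AM ε Q) (AM_nonneg hε0 hQ) d (h - 1 - d) m r r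
    have e3 : d + (h - 1 - d) = h - 1 := by omega
    rw [e3] at h2
    have h4 := pow_diag_ge_one hε0 hQ (h - 1 - d) r
    have h5 : ε ^ (h - 1) ≤ ε ^ d := pow_le_pow_of_le_one hε0.le hε1.le (by omega)
    nlinarith [pow_nonneg hε0.le d]
  · set d := (m : ℕ) - (r : ℕ) with hd
    have h1 : ε ^ d ≤ (AM ε Q ^ d) m r := by
      have hc := chain_down hε0 hQ d (m : ℕ) (by omega) (by omega)
      have em : (⟨(m : ℕ), by omega⟩ : Fin h) = m := finmk _ _ rfl
      have er : (⟨(m : ℕ) - d, by omega⟩ : Fin h) = r := finmk _ _ (by omega)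
      rwa [em, er] at hc
    have h2 := pow_add_entry_ge (AM ε Q) (AM_nonneg hε0 hQ) d (h - 1 - d) m r r
    have e3 : d + (h - 1 - d) = h - 1 := by omega
    rw [e3] at h2
    have h4 := pow_diag_ge_one hε0 hQ (h - 1 - d) r
    have h5 : ε ^ (h - 1) ≤ ε ^ d := pow_le_pow_of_le_one hε0.le hε1.le (by omega)
    nlinarith [pow_nonneg hε0.le d]

end EMLam2


namespace EMDen
open Finset EMAux EMAux2 EMBlock EMLam EMLam2

variable {h N : ℕ} {ε t : ℝ}

lemma std_nonneg {n : Type*} [DecidableEq n] {c : ℝ} (hc : 0 ≤ c) (i j a b : n) :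
    0 ≤ Matrix.single i j c a b := by
  simp only [Matrix.single, Matrix.of_apply]
  split
  · exact hc
  · exact le_rfl

lemma mul_entry_nonneg {n : Type*} [Fintype n] {X Y : Matrix n n ℝ}
    (hX : ∀ i j, 0 ≤ X i j) (hY : ∀ i j, 0 ≤ Y i j) (i j : n) : 0 ≤ (X * Y) i j := by
  rw [Matrix.mul_apply]
  exact Finset.sum_nonneg fun m _ => mul_nonneg (hX i m) (hY m j)

lemma offU_entry_nonneg {n : Type*} [Fintype n] [DecidableEq n] {A B : Matrix n n ℝ}
    (hA : ∀ i j, 0 ≤ A i j) (hB : ∀ i j, 0 ≤ B i j) (k : ℕ) (s r : n) :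
    0 ≤ offU A B k s r := by
  rw [offU, Matrix.sum_apply]
  refine Finset.sum_nonneg fun p _ => ?_
  exact mul_entry_nonneg (fun i j => mul_entry_nonneg (pow_entry_nonneg A hA p) hB i j)
    (pow_entry_nonneg A hA _) s r

lemma summable_offU_entry {n : Type*} [Fintype n] [DecidableEq n]
    (t : ℝ) (A B : Matrix n n ℝ) (s r : n) :
    Summable (fun k : ℕ => ((k.factorial : ℝ))⁻¹ * (t ^ k * offU A B k s r)) := by
  have h1 := summable_tsmul_entry t (Matrix.fromBlocks A B 0 A) (Sum.inl s) (Sum.inr r)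
  simp only [blockpow_apply] at h1
  exact h1

variable {Q : Matrix (Fin h) (Fin h) ℝ}

lemma tQ_plus : t • Q + (t * cc h ε) • (1 : Matrix (Fin h) (Fin h) ℝ) = t • AM ε Q := by
  rw [AM, smul_add, smul_smul]

lemma den_eq (i j : Fin h) :
    mexp (t • Q) i j = Real.exp (-(t * cc h ε)) * mexp (t • AM ε Q) i j := by
  rw [mexp_shift (t • Q) (t * cc h ε) i j, tQ_plus]

lemma den_nonneg (hε0 : 0 < ε) (ht : 0 < t) (hQ : InLambda ε Q) (i j : Fin h) :
    0 ≤ mexp (t • Q) i j := by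
  rw [den_eq]
  refine mul_nonneg (Real.exp_nonneg _) (mexp_entry_nonneg _ ?_ i j)
  intro a b
  rw [Matrix.smul_apply, smul_eq_mul]
  exact mul_nonneg ht.le (AM_nonneg hε0 hQ a b)

lemma den_le_one (hε0 : 0 < ε) (ht : 0 < t) (hQ : InLambda ε Q) (i j : Fin h) :
    mexp (t • Q) i j ≤ 1 := by
  have hrow : ∀ a, ∑ b, (t • Q) a b = 0 := by
    intro a
    simp only [Matrix.smul_apply, smul_eq_mul, ← Finset.mul_sum, hQ.1.2.2 a, mul_zero]
  have h1 := mexp_rowsum_one (t • Q) hrow i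
  have h2 : mexp (t • Q) i j ≤ ∑ b, mexp (t • Q) i b :=
    Finset.single_le_sum (fun b _ => den_nonneg hε0 ht hQ i b) (Finset.mem_univ j)
  linarith

lemma Cphi_block (i : Fin h) :
    t • Cφ i Q + (t * cc h ε) • (1 : Matrix (Fin h ⊕ Fin h) (Fin h ⊕ Fin h) ℝ)
      = t • Matrix.fromBlocks (AM ε Q) (Matrix.single i i 1) 0 (AM ε Q) := by
  rw [Cφ, AM, ← Matrix.fromBlocks_one (l := Fin h) (m := Fin h) (α := ℝ)]
  simp only [Matrix.fromBlocks_smul, Matrix.fromBlocks_add, smul_add, smul_smul, smul_zero,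
    add_zero, zero_add]

lemma Cgamma_block (i j : Fin h) :
    t • Cγ i j Q + (t * cc h ε) • (1 : Matrix (Fin h ⊕ Fin h) (Fin h ⊕ Fin h) ℝ)
      = t • Matrix.fromBlocks (AM ε Q) (Q i j • Matrix.single i j 1) 0 (AM ε Q) := by
  rw [Cγ, AM, ← Matrix.fromBlocks_one (l := Fin h) (m := Fin h) (α := ℝ)]
  simp only [Matrix.fromBlocks_smul, Matrix.fromBlocks_add, smul_add, smul_smul, smul_zero,
    add_zero, zero_add]

lemma numphi_eq (i s r : Fin h) :
    mexp (t • Cφ i Q) (Sum.inl s) (Sum.inr r)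
      = Real.exp (-(t * cc h ε)) *
        ∑' k : ℕ, ((k.factorial : ℝ))⁻¹ *
          (t ^ k * offU (AM ε Q) (Matrix.single i i 1) k s r) := by
  rw [mexp_shift _ (t * cc h ε), Cphi_block, mexp_block_apply]

lemma numgamma_eq (i j s r : Fin h) :
    mexp (t • Cγ i j Q) (Sum.inl s) (Sum.inr r)
      = Real.exp (-(t * cc h ε)) *
        ∑' k : ℕ, ((k.factorial : ℝ))⁻¹ *
          (t ^ k * offU (AM ε Q) (Q i j • Matrix.single i j 1) k s r) := by
  rw [mexp_shift _ (t * cc h ε), Cgamma_block, mexp_block_apply]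

lemma numphi_nonneg (hε0 : 0 < ε) (ht : 0 < t) (hQ : InLambda ε Q) (i s r : Fin h) :
    0 ≤ mexp (t • Cφ i Q) (Sum.inl s) (Sum.inr r) := by
  rw [numphi_eq]
  refine mul_nonneg (Real.exp_nonneg _) (tsum_nonneg fun k => ?_)
  refine mul_nonneg (by positivity) (mul_nonneg (by positivity) ?_)
  exact offU_entry_nonneg (AM_nonneg hε0 hQ) (std_nonneg zero_le_one i i) k s r

lemma numgamma_nonneg (hε0 : 0 < ε) (ht : 0 < t) (hQ : InLambda ε Q)
    (i j s r : Fin h) (hij : i ≠ j) :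
    0 ≤ mexp (t • Cγ i j Q) (Sum.inl s) (Sum.inr r) := by
  rw [numgamma_eq]
  refine mul_nonneg (Real.exp_nonneg _) (tsum_nonneg fun k => ?_)
  refine mul_nonneg (by positivity) (mul_nonneg (by positivity) ?_)
  refine offU_entry_nonneg (AM_nonneg hε0 hQ) (fun a b => ?_) k s r
  rw [Matrix.smul_apply, smul_eq_mul]
  exact mul_nonneg (hQ.1.1 i j hij) (std_nonneg zero_le_one i j a b)

lemma offU_one_apply (A : Matrix (Fin h) (Fin h) ℝ) (B : Matrix (Fin h) (Fin h) ℝ) (s r : Fin h) :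
    offU A B 1 s r = B s r := by
  rw [offU]
  simp

lemma triple_sum_ge (f : Fin N → Fin h → Fin h → ℝ) (hf : ∀ u s r, 0 ≤ f u s r)
    (u0 : Fin N) (s0 r0 : Fin h) :
    f u0 s0 r0 ≤ ∑ u, ∑ s, ∑ r, f u s r := by
  calc f u0 s0 r0 ≤ ∑ r, f u0 s0 r :=
        Finset.single_le_sum (fun r _ => hf u0 s0 r) (Finset.mem_univ r0)
  _ ≤ ∑ s, ∑ r, f u0 s r :=
        Finset.single_le_sum (f := fun s => ∑ r, f u0 s r)
          (fun s _ => Finset.sum_nonneg fun r _ => hf u0 s r) (Finset.mem_univ s0)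
  _ ≤ ∑ u, ∑ s, ∑ r, f u s r :=
        Finset.single_le_sum (f := fun u => ∑ s, ∑ r, f u s r)
          (fun u _ => Finset.sum_nonneg fun s _ =>
            Finset.sum_nonneg fun r _ => hf u s r) (Finset.mem_univ u0)

end EMDen


namespace EMShat
open Finset EMAux EMAux2 EMBlock EMLam EMLam2 EMDen

variable {h N : ℕ} {ε t : ℝ}

lemma shat_term_nonneg (hε0 : 0 < ε) (ht : 0 < t) {Q : Matrix (Fin h) (Fin h) ℝ}
    (hQ : InLambda ε Q) (P : Fin N → Matrix (Fin h) (Fin h) ℝ)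
    (hP : ∀ u, IsStochastic (P u)) (i : Fin h) :
    ∀ u s r, 0 ≤ P u s r * mexp (t • Cφ i Q) (Sum.inl s) (Sum.inr r) / mexp (t • Q) s r :=
  fun u s r => div_nonneg (mul_nonneg ((hP u).1 s r) (numphi_nonneg hε0 ht hQ i s r))
    (den_nonneg hε0 ht hQ s r)

lemma numphi_ge_t (hε0 : 0 < ε) (ht : 0 < t) {Q : Matrix (Fin h) (Fin h) ℝ}
    (hQ : InLambda ε Q) (i : Fin h) :
    t * Real.exp (-(t * cc h ε)) ≤ mexp (t • Cφ i Q) (Sum.inl i) (Sum.inr i) := by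
  rw [numphi_eq]
  have h3 := Summable.le_tsum (summable_offU_entry t (AM ε Q) (Matrix.single i i 1) i i) 1
    (fun k _ => mul_nonneg (by positivity)
      (mul_nonneg (pow_nonneg ht.le k)
        (offU_entry_nonneg (AM_nonneg hε0 hQ) (std_nonneg zero_le_one i i) k i i)))
  have h5 : ((1:ℕ).factorial : ℝ)⁻¹ *
      (t ^ 1 * offU (AM ε Q) (Matrix.single i i 1) 1 i i) = t := by
    rw [offU_one_apply]
    simp
  rw [h5] at h3
  have hW := Real.exp_pos (-(t * cc h ε))
  calc t * Real.exp (-(t * cc h ε)) = Real.exp (-(t * cc h ε)) * t := by ring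
  _ ≤ _ := mul_le_mul_of_nonneg_left h3 hW.le

lemma shat_ge_diag (hε0 : 0 < ε) (ht : 0 < t) (P : Fin N → Matrix (Fin h) (Fin h) ℝ)
    (hP : ∀ u, IsStochastic (P u)) (u : Fin N) (i : Fin h) (hPu : 0 < P u i i)
    {Q : Matrix (Fin h) (Fin h) ℝ} (hQ : InLambda ε Q)
    (hws : 0 < mexp (t • Q) i i) :
    P u i i * (t * Real.exp (-(t * cc h ε))) ≤ Shat P t Q i := by
  have hkey : t * Real.exp (-(t * cc h ε)) ≤
      mexp (t • Cφ i Q) (Sum.inl i) (Sum.inr i) / mexp (t • Q) i i := by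
    rw [le_div_iff₀ hws]
    have h1 : mexp (t • Q) i i ≤ 1 := den_le_one hε0 ht hQ i i
    have h2 := numphi_ge_t hε0 ht hQ i
    have h4 : t * Real.exp (-(t * cc h ε)) * mexp (t • Q) i i ≤
        t * Real.exp (-(t * cc h ε)) * 1 :=
      mul_le_mul_of_nonneg_left h1 (by positivity)
    linarith
  calc P u i i * (t * Real.exp (-(t * cc h ε)))
      ≤ P u i i * (mexp (t • Cφ i Q) (Sum.inl i) (Sum.inr i) / mexp (t • Q) i i) :=
        mul_le_mul_of_nonneg_left hkey hPu.le
  _ = P u i i * mexp (t • Cφ i Q) (Sum.inl i) (Sum.inr i) / mexp (t • Q) i i := by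
        rw [mul_div_assoc]
  _ ≤ Shat P t Q i := by
        unfold Shat
        exact triple_sum_ge _ (shat_term_nonneg hε0 ht hQ P hP i) u i i

lemma jhat_pos (hε0 : 0 < ε) (ht : 0 < t) (P : Fin N → Matrix (Fin h) (Fin h) ℝ)
    (hP : ∀ u, IsStochastic (P u)) (u : Fin N) (i j : Fin h) (hij : i ≠ j)
    {Q : Matrix (Fin h) (Fin h) ℝ} (hQ : InLambda ε Q) (hq : 0 < Q i j)
    (hPu : 0 < P u i j) (hws : 0 < mexp (t • Q) i j) :
    0 < Jhat P t Q i j := by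
  have hBnn : ∀ a b, 0 ≤ (Q i j • Matrix.single i j (1:ℝ)) a b := by
    intro a b
    rw [Matrix.smul_apply, smul_eq_mul]
    exact mul_nonneg hq.le (std_nonneg zero_le_one i j a b)
  have hnum : 0 < mexp (t • Cγ i j Q) (Sum.inl i) (Sum.inr j) := by
    rw [numgamma_eq]
    have h3 := Summable.le_tsum (summable_offU_entry t (AM ε Q) (Q i j • Matrix.single i j 1) i j) 1
      (fun k _ => mul_nonneg (by positivity)
        (mul_nonneg (pow_nonneg ht.le k)
          (offU_entry_nonneg (AM_nonneg hε0 hQ) hBnn k i j)))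
    have h5 : (0:ℝ) < ((1:ℕ).factorial : ℝ)⁻¹ *
        (t ^ 1 * offU (AM ε Q) (Q i j • Matrix.single i j 1) 1 i j) := by
      rw [offU_one_apply]
      simp only [Matrix.smul_apply, Matrix.single_apply_same, smul_eq_mul, mul_one,
        Nat.factorial_one, Nat.cast_one, inv_one, pow_one, one_mul]
      positivity
    exact mul_pos (Real.exp_pos _) (lt_of_lt_of_le h5 h3)
  have hterm : 0 < P u i j * mexp (t • Cγ i j Q) (Sum.inl i) (Sum.inr j) / mexp (t • Q) i j :=
    div_pos (mul_pos hPu hnum) hws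
  have hnn : ∀ u' s r, 0 ≤ P u' s r * mexp (t • Cγ i j Q) (Sum.inl s) (Sum.inr r) /
      mexp (t • Q) s r := fun u' s r =>
    div_nonneg (mul_nonneg ((hP u').1 s r) (numgamma_nonneg hε0 ht hQ i j s r hij))
      (den_nonneg hε0 ht hQ s r)
  have := triple_sum_ge _ hnn u i j
  unfold Jhat
  linarith

lemma shat_ge_last (hh : 2 ≤ h) (hN : 0 < N) (hε0 : 0 < ε) (hε1 : ε < 1) (ht : 0 < t)
    (P : Fin N → Matrix (Fin h) (Fin h) ℝ) (hP : ∀ u, IsStochastic (P u)) :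
    ∃ b : ℝ, 0 < b ∧ ∀ Q : Matrix (Fin h) (Fin h) ℝ, InLambda ε Q →
      (∀ u s r, 0 < P u s r → 0 < mexp (t • Q) s r) →
      b ≤ Shat P t Q ⟨h - 1, by omega⟩ := by
  have hc1 : 1 ≤ cc h ε := cc_ge_one hε0 (by omega)
  set c := cc h ε with hc
  have htc : 0 < t * c := by nlinarith
  set l : Fin h := ⟨h - 1, by omega⟩ with hl
  set u0 : Fin N := ⟨0, hN⟩ with hu0
  obtain ⟨r0, hr0⟩ : ∃ r, 0 < P u0 l r := by
    by_contra hcon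
    push_neg at hcon
    have h1 : ∑ r, P u0 l r ≤ 0 := Finset.sum_nonpos fun r _ => hcon r
    have h2 := (hP u0).2 l
    linarith
  by_cases hcase : r0 = l
  · have hr0' : 0 < P u0 l l := hcase ▸ hr0
    refine ⟨P u0 l l * (t * Real.exp (-(t * c))), mul_pos hr0' (by positivity),
      fun Q hQ hws => ?_⟩
    exact shat_ge_diag hε0 ht P hP u0 l hr0' hQ (hws u0 l l hr0')
  · set κ := t ^ (h - 1 + 1) * ε ^ (h - 1) / (((h - 1 + 1).factorial : ℕ) : ℝ) with hκ
    have hκpos : 0 < κ := by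
      rw [hκ]
      have := Nat.factorial_pos (h - 1 + 1)
      positivity
    set g : ℕ → ℝ := fun m => (t * c) ^ m / (m.factorial : ℝ) with hg
    have hgsum : Summable g := Real.summable_pow_div_factorial (t * c)
    have htail : Filter.Tendsto (fun B : ℕ => (∑' m, g m) - ∑ m ∈ Finset.range B, g m)
        Filter.atTop (nhds 0) := by
      have h1 := hgsum.hasSum.tendsto_sum_nat
      have h2 : Filter.Tendsto (fun _ : ℕ => ∑' m, g m) Filter.atTop (nhds (∑' m, g m)) :=
        tendsto_const_nhds
      simpa using h2.sub h1
    obtain ⟨B, hB⟩ : ∃ B : ℕ, (∑' m, g m) - ∑ m ∈ Finset.range B, g m < κ / 2 / (t * c) :=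
      (htail.eventually_lt_const (by positivity : (0:ℝ) < κ / 2 / (t * c))).exists
    refine ⟨P u0 l r0 * (t / (2 * ((B:ℝ) + 1))), by positivity, fun Q hQ hws => ?_⟩
    have hAnn := AM_nonneg hε0 hQ
    set A := AM ε Q with hA
    have hρ0 : 0 ≤ -Q l l := neg_nonneg.mpr (hQ.1.2.1 l)
    set ρ := -Q l l with hρ
    set x : ℕ → ℝ := fun b => (A ^ b) l r0 with hx
    have hx0 : ∀ b, 0 ≤ x b := fun b => pow_entry_nonneg A hAnn b l r0
    have hcpos : (0:ℝ) < c := by linarith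
    have hxc : ∀ b m, (A ^ b) m r0 ≤ c ^ b := fun b m =>
      pow_entry_le_rowsum A c hAnn (AM_rowsum hQ) b m r0
    have hAsum : ∑ m ∈ Finset.univ.erase l, A l m = ρ := by
      have h1 := AM_rowsum hQ l
      have h2 : A l l + ∑ m ∈ Finset.univ.erase l, A l m = c := by
        rw [Finset.add_sum_erase _ _ (Finset.mem_univ l)]
        exact h1
      have h3 : A l l = Q l l + c := AM_apply_diag l
      rw [hρ]
      linarith
    have hAll : A l l ≤ c := by
      have h3 : A l l = Q l l + c := AM_apply_diag l
      have := hQ.1.2.1 l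
      linarith
    have hx00 : x 0 = 0 := by
      have : (⟨h - 1, by omega⟩ : Fin h) ≠ r0 := fun e => hcase e.symm
      simp [hx, Matrix.one_apply, this]
      exact this
    have hxub : ∀ b, x b ≤ ρ * b * c ^ b := by
      intro b
      induction b with
      | zero => simp [hx00]
      | succ b ih =>
        have hstep : x (b + 1) = ∑ m, A l m * (A ^ b) m r0 := by
          show (A ^ (b + 1)) l r0 = _
          rw [pow_succ', Matrix.mul_apply]
        have h5 : x (b + 1) = A l l * (A ^ b) l r0 + ∑ m ∈ Finset.univ.erase l,
            A l m * (A ^ b) m r0 := by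
          rw [hstep, Finset.add_sum_erase _ (fun m => A l m * (A ^ b) m r0) (Finset.mem_univ l)]
        have h4 : ∑ m ∈ Finset.univ.erase l, A l m * (A ^ b) m r0 ≤ ρ * c ^ b := by
          calc ∑ m ∈ Finset.univ.erase l, A l m * (A ^ b) m r0
              ≤ ∑ m ∈ Finset.univ.erase l, A l m * c ^ b :=
              Finset.sum_le_sum fun m _ =>
                mul_le_mul_of_nonneg_left (hxc b m) (hAnn l m)
          _ = ρ * c ^ b := by rw [← Finset.sum_mul, hAsum]
        have h8 : A l l * (A ^ b) l r0 ≤ c * (ρ * b * c ^ b) := by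
          refine mul_le_mul hAll ih (hx0 b) hcpos.le
        have hcb : (0:ℝ) ≤ c ^ b := pow_nonneg hcpos.le b
        have hρcb : ρ * c ^ b ≤ ρ * c ^ (b + 1) := by
          refine mul_le_mul_of_nonneg_left ?_ hρ0
          calc c ^ b = 1 * c ^ b := (one_mul _).symm
          _ ≤ c * c ^ b := mul_le_mul_of_nonneg_right hc1 hcb
          _ = c ^ (b + 1) := (pow_succ' c b).symm
        have hfin : c * (ρ * b * c ^ b) + ρ * c ^ (b + 1) = ρ * ((b:ℝ) + 1) * c ^ (b + 1) := by
          rw [pow_succ' c b]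
          ring
        calc x (b + 1) ≤ c * (ρ * b * c ^ b) + ρ * c ^ b := by linarith
        _ ≤ c * (ρ * b * c ^ b) + ρ * c ^ (b + 1) := by linarith
        _ = ρ * ((b:ℝ) + 1) * c ^ (b + 1) := hfin
        _ = ρ * ((b + 1 : ℕ) : ℝ) * c ^ (b + 1) := by push_cast; ring
    have hxh : ρ * ε ^ (h - 1) ≤ x (h - 1 + 1) := by
      have hstep : x (h - 1 + 1) = ∑ m, A l m * (A ^ (h - 1)) m r0 := by
        show (A ^ (h - 1 + 1)) l r0 = _
        rw [pow_succ', Matrix.mul_apply]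
      have h5 : x (h - 1 + 1) = A l l * (A ^ (h - 1)) l r0 + ∑ m ∈ Finset.univ.erase l,
          A l m * (A ^ (h - 1)) m r0 := by
        rw [hstep, Finset.add_sum_erase _ (fun m => A l m * (A ^ (h - 1)) m r0)
          (Finset.mem_univ l)]
      have h6 : ρ * ε ^ (h - 1) = ∑ m ∈ Finset.univ.erase l, A l m * ε ^ (h - 1) := by
        rw [← Finset.sum_mul, hAsum]
      have h7 : ∑ m ∈ Finset.univ.erase l, A l m * ε ^ (h - 1) ≤
          ∑ m ∈ Finset.univ.erase l, A l m * (A ^ (h - 1)) m r0 := by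
        refine Finset.sum_le_sum fun m hm => ?_
        refine mul_le_mul_of_nonneg_left ?_ (hAnn l m)
        refine reach hε0 hε1 hQ m r0 ?_
        have hm' : m ≠ l := (Finset.mem_erase.mp hm).1
        have hlval : (l : ℕ) = h - 1 := rfl
        have hm2 : (m : ℕ) ≠ h - 1 := fun hmm => hm' (Fin.ext (hmm.trans hlval.symm))
        have hmlt := m.isLt
        omega
      have h9 : 0 ≤ A l l * (A ^ (h - 1)) l r0 :=
        mul_nonneg (hAnn l l) (pow_entry_nonneg A hAnn _ l r0)
      linarith
    set f : ℕ → ℝ := fun b => ((b.factorial : ℝ))⁻¹ * (t ^ b * x b) with hf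
    have hfsum : Summable f := summable_tsmul_entry t A l r0
    have hf0 : ∀ b, 0 ≤ f b := fun b =>
      mul_nonneg (by positivity) (mul_nonneg (pow_nonneg ht.le b) (hx0 b))
    set D1 := ∑' b, f b with hD1
    set W := Real.exp (-(t * c)) with hW
    have hWpos : 0 < W := Real.exp_pos _
    have hden : mexp (t • Q) l r0 = W * D1 := by
      rw [den_eq l r0, mexp_tsmul_apply]
    have hdenpos : 0 < mexp (t • Q) l r0 := hws u0 l r0 hr0
    have hD1pos : 0 < D1 := by
      by_contra hcon
      push_neg at hcon
      nlinarith
    have hκρ : κ * ρ ≤ D1 := by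
      have h1 : f (h - 1 + 1) ≤ D1 := Summable.le_tsum hfsum _ (fun b _ => hf0 b)
      have hfac : (0:ℝ) < (((h - 1 + 1).factorial : ℕ) : ℝ) := by
        exact_mod_cast Nat.factorial_pos _
      have hpow : (0:ℝ) ≤ t ^ (h - 1 + 1) := pow_nonneg ht.le _
      have h2 : κ * ρ ≤ f (h - 1 + 1) := by
        have e1 : κ * ρ = (((h - 1 + 1).factorial : ℕ) : ℝ)⁻¹ *
            (t ^ (h - 1 + 1) * (ρ * ε ^ (h - 1))) := by
          rw [hκ]
          field_simp
        rw [e1, hf]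
        dsimp only
        exact mul_le_mul_of_nonneg_left
          (mul_le_mul_of_nonneg_left hxh hpow) (by positivity)
      linarith
    have htailf : ∑' m, f (m + (B + 1)) ≤ ρ * (t * c) * ∑' m, g (m + B) := by
      have hsum1 : Summable (fun m => f (m + (B + 1))) :=
        (summable_nat_add_iff (B + 1)).mpr hfsum
      have hsum2 : Summable (fun m => ρ * (t * c) * g (m + B)) :=
        ((summable_nat_add_iff B).mpr hgsum).mul_left _
      have hterm : ∀ m, f (m + (B + 1)) ≤ ρ * (t * c) * g (m + B) := by
        intro m
        have hfac : ((m + B + 1).factorial : ℝ) = ((m + B + 1) : ℕ) *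
            ((m + B).factorial : ℕ) := by
          exact_mod_cast Nat.factorial_succ (m + B)
        have e0 : m + (B + 1) = m + B + 1 := by omega
        rw [hf, hg]
        dsimp only
        rw [e0]
        have h1 : x (m + B + 1) ≤ ρ * ((m + B + 1 : ℕ) : ℝ) * c ^ (m + B + 1) :=
          hxub (m + B + 1)
        have h2 : ((m + B + 1).factorial : ℝ)⁻¹ * (t ^ (m + B + 1) * x (m + B + 1)) ≤
            ((m + B + 1).factorial : ℝ)⁻¹ *
              (t ^ (m + B + 1) * (ρ * ((m + B + 1 : ℕ) : ℝ) * c ^ (m + B + 1))) :=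
          mul_le_mul_of_nonneg_left
            (mul_le_mul_of_nonneg_left h1 (pow_nonneg ht.le _)) (by positivity)
        refine le_trans h2 (le_of_eq ?_)
        have hfacpos : (0:ℝ) < ((m + B).factorial : ℕ) := by
          exact_mod_cast Nat.factorial_pos _
        have hnpos : (0:ℝ) < ((m + B + 1 : ℕ) : ℝ) := by positivity
        rw [hfac]
        rw [mul_pow, pow_succ t (m + B), pow_succ c (m + B)]
        push_cast
        field_simp
      calc ∑' m, f (m + (B + 1)) ≤ ∑' m, ρ * (t * c) * g (m + B) :=
            Summable.tsum_le_tsum hterm hsum1 hsum2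
      _ = ρ * (t * c) * ∑' m, g (m + B) := by rw [tsum_mul_left]
    have htail2 : (t * c) * ∑' m, g (m + B) ≤ κ / 2 := by
      have hsplit := Summable.sum_add_tsum_nat_add B hgsum
      have h1 : ∑' m, g (m + B) < κ / 2 / (t * c) := by
        rw [hg] at hsplit hB ⊢
        linarith
      have h2 := (lt_div_iff₀ htc).mp h1
      linarith
    have hhead : D1 / 2 ≤ ∑ b ∈ Finset.range (B + 1), f b := by
      have hsplit := Summable.sum_add_tsum_nat_add (B + 1) hfsum
      have h1 : ∑' m, f (m + (B + 1)) ≤ ρ * (κ / 2) := by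
        calc ∑' m, f (m + (B + 1)) ≤ ρ * (t * c) * ∑' m, g (m + B) := htailf
        _ = ρ * ((t * c) * ∑' m, g (m + B)) := by ring
        _ ≤ ρ * (κ / 2) := mul_le_mul_of_nonneg_left htail2 hρ0
      have h2 : ρ * (κ / 2) ≤ D1 / 2 := by nlinarith
      have h3 : ∑ b ∈ Finset.range (B + 1), f b + ∑' m, f (m + (B + 1)) = D1 := hsplit
      linarith
    set E := Matrix.single l l (1:ℝ) with hE
    set ψ : ℕ → ℝ := fun k => ((k.factorial : ℝ))⁻¹ * (t ^ k * offU A E k l r0) with hψ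
    have hψ0 : ∀ k, 0 ≤ ψ k := fun k =>
      mul_nonneg (by positivity) (mul_nonneg (pow_nonneg ht.le k)
        (offU_entry_nonneg hAnn (std_nonneg zero_le_one l l) k l r0))
    have hψsum : Summable ψ := summable_offU_entry t A E l r0
    have hnum : mexp (t • Cφ l Q) (Sum.inl l) (Sum.inr r0) = W * ∑' k, ψ k :=
      numphi_eq l l r0
    have hψge : ∀ b ∈ Finset.range (B + 1), (t / (B + 1)) * f b ≤ ψ (b + 1) := by
      intro b hb
      have hble : b ≤ B := by
        have := Finset.mem_range.mp hb
        omega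
      have h1 : x b ≤ offU A E (b + 1) l r0 := by
        rw [hE, offU_std_apply]
        have h2 : (A ^ 0) l l * 1 * (A ^ (b + 1 - 1 - 0)) l r0 ≤
            ∑ p ∈ Finset.range (b + 1), (A ^ p) l l * 1 * (A ^ (b + 1 - 1 - p)) l r0 := by
          have hmem : (0:ℕ) ∈ Finset.range (b + 1) := Finset.mem_range.mpr (Nat.succ_pos b)
          refine Finset.single_le_sum
            (f := fun p => (A ^ p) l l * 1 * (A ^ (b + 1 - 1 - p)) l r0) (fun p _ => ?_) hmem
          exact mul_nonneg (mul_nonneg (pow_entry_nonneg A hAnn p l l) zero_le_one)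
            (pow_entry_nonneg A hAnn _ l r0)
        have h3 : (A ^ 0) l l * 1 * (A ^ (b + 1 - 1 - 0)) l r0 = x b := by
          simp [Matrix.one_apply]
          rfl
        rw [h3] at h2
        exact h2
      have h4 : (t / ((b:ℝ) + 1)) * f b = ((b + 1).factorial : ℝ)⁻¹ * (t ^ (b + 1) * x b) := by
        rw [hf]
        dsimp only
        have hfac : ((b + 1).factorial : ℝ) = ((b + 1 : ℕ) : ℝ) * (b.factorial : ℕ) := by
          exact_mod_cast Nat.factorial_succ b
        have hbfac : (0:ℝ) < ((b.factorial : ℕ) : ℝ) := by exact_mod_cast Nat.factorial_pos b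
        rw [hfac, pow_succ t b]
        push_cast
        field_simp
      have h5 : (t / ((B:ℝ) + 1)) * f b ≤ (t / ((b:ℝ) + 1)) * f b := by
        refine mul_le_mul_of_nonneg_right ?_ (hf0 b)
        have hb1 : (0:ℝ) < (b:ℝ) + 1 := by positivity
        have hB1 : (0:ℝ) < (B:ℝ) + 1 := by positivity
        rw [div_le_div_iff₀ hB1 hb1]
        have hble' : ((b:ℝ)) + 1 ≤ (B:ℝ) + 1 := by exact_mod_cast Nat.succ_le_succ hble
        nlinarith
      calc (t / ((B:ℝ) + 1)) * f b ≤ (t / ((b:ℝ) + 1)) * f b := h5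
      _ = ((b + 1).factorial : ℝ)⁻¹ * (t ^ (b + 1) * x b) := h4
      _ ≤ ψ (b + 1) := by
          rw [hψ]
          dsimp only
          exact mul_le_mul_of_nonneg_left
            (mul_le_mul_of_nonneg_left h1 (pow_nonneg ht.le _)) (by positivity)
    have hN1 : (t / ((B:ℝ) + 1)) * (D1 / 2) ≤ ∑' k, ψ k := by
      calc (t / ((B:ℝ) + 1)) * (D1 / 2)
          ≤ (t / ((B:ℝ) + 1)) * ∑ b ∈ Finset.range (B + 1), f b :=
            mul_le_mul_of_nonneg_left hhead (by positivity)
      _ = ∑ b ∈ Finset.range (B + 1), (t / ((B:ℝ) + 1)) * f b := Finset.mul_sum _ _ _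
      _ ≤ ∑ b ∈ Finset.range (B + 1), ψ (b + 1) := Finset.sum_le_sum hψge
      _ ≤ ∑ k ∈ Finset.range (B + 2), ψ k := by
            rw [Finset.sum_range_succ' ψ (B + 1)]
            have := hψ0 0
            linarith
      _ ≤ ∑' k, ψ k := Summable.sum_le_tsum _ (fun k _ => hψ0 k) hψsum
    have hkey : t / (2 * ((B:ℝ) + 1)) ≤ mexp (t • Cφ l Q) (Sum.inl l) (Sum.inr r0) /
        mexp (t • Q) l r0 := by
      rw [le_div_iff₀ hdenpos, hden, hnum]
      have h1 : W * ((t / ((B:ℝ) + 1)) * (D1 / 2)) ≤ W * ∑' k, ψ k :=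
        mul_le_mul_of_nonneg_left hN1 hWpos.le
      calc t / (2 * ((B:ℝ) + 1)) * (W * D1) = W * ((t / ((B:ℝ) + 1)) * (D1 / 2)) := by
            have hB1 : ((B:ℝ) + 1) ≠ 0 := by positivity
            field_simp
      _ ≤ W * ∑' k, ψ k := h1
    calc P u0 l r0 * (t / (2 * ((B:ℝ) + 1))) ≤
        P u0 l r0 * (mexp (t • Cφ l Q) (Sum.inl l) (Sum.inr r0) / mexp (t • Q) l r0) :=
        mul_le_mul_of_nonneg_left hkey hr0.le
    _ = P u0 l r0 * mexp (t • Cφ l Q) (Sum.inl l) (Sum.inr r0) / mexp (t • Q) l r0 := by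
        rw [mul_div_assoc]
    _ ≤ Shat P t Q l := by
        unfold Shat
        exact triple_sum_ge _ (shat_term_nonneg hε0 ht hQ P hP l) u0 l r0


end EMShat


namespace EMKey
open EMLam EMShat

lemma key1d (ε S q q' J : ℝ) (hε0 : 0 < ε) (hS : 0 < S) (hq : 0 < q) (hq' : 0 < q')
    (hqε : q < 1 / ε) (hq'ε : q' < 1 / ε) (hJ : J = q' * S) :
    S * ε / 4 * (q' - q) ^ 2 ≤
      (Real.log q' * J - q' * S) - (Real.log q * J - q * S) := by
  set w := Real.sqrt (q / q') with hw
  have hqq' : 0 < q / q' := div_pos hq hq'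
  have hw0 : 0 < w := Real.sqrt_pos.mpr hqq'
  have hw2 : w ^ 2 = q / q' := Real.sq_sqrt hqq'.le
  have hqw : q = q' * w ^ 2 := by rw [hw2]; field_simp
  have hlogw : Real.log w ≤ w - 1 := Real.log_le_sub_one_of_pos hw0
  have hlogdiff : Real.log q' - Real.log q = -(2 * Real.log w) := by
    have h1 : Real.log (q / q') = 2 * Real.log w := by
      rw [← hw2, Real.log_pow]
      push_cast
      ring
    rw [Real.log_div hq.ne' hq'.ne'] at h1
    linarith
  have hmain : q' * (w - 1) ^ 2 ≤ q' * (Real.log q' - Real.log q) - q' + q := by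
    have h2 : -(2 * (w - 1)) ≤ -(2 * Real.log w) := by linarith
    have h3 : q' * (-(2 * (w - 1))) ≤ q' * (Real.log q' - Real.log q) := by
      rw [hlogdiff]
      exact mul_le_mul_of_nonneg_left h2 hq'.le
    nlinarith [hqw]
  have hsq : (q' - q) ^ 2 = q' ^ 2 * (w - 1) ^ 2 * (w + 1) ^ 2 := by
    rw [hqw]
    ring
  have h2qw : 2 * (q' * w) ≤ q + q' := by
    nlinarith [mul_nonneg hq'.le (sq_nonneg (w - 1))]
  have hqb : q' * (w + 1) ^ 2 ≤ 2 * (q + q') := by nlinarith [hqw]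
  have hbound : ε * (q' * (w + 1) ^ 2) ≤ 4 := by
    have hεq : q * ε < 1 := (lt_div_iff₀ hε0).mp hqε
    have hεq' : q' * ε < 1 := (lt_div_iff₀ hε0).mp hq'ε
    have h5 := mul_le_mul_of_nonneg_left hqb hε0.le
    nlinarith
  have hfin1 : S * ε / 4 * (q' - q) ^ 2 ≤ S * (q' * (w - 1) ^ 2) := by
    rw [hsq]
    have hXS : 0 ≤ S * q' * (w - 1) ^ 2 := by positivity
    have h5 := mul_le_mul_of_nonneg_left hbound hXS
    nlinarith [h5]
  have hRHS : (Real.log q' * J - q' * S) - (Real.log q * J - q * S)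
      = S * (q' * (Real.log q' - Real.log q) - q' + q) := by
    rw [hJ]
    ring
  rw [hRHS]
  calc S * ε / 4 * (q' - q) ^ 2 ≤ S * (q' * (w - 1) ^ 2) := hfin1
  _ ≤ S * (q' * (Real.log q' - Real.log q) - q' + q) :=
      mul_le_mul_of_nonneg_left hmain hS.le

end EMKey

namespace EMUnif
open EMLam EMShat

lemma shat_uniform {h N : ℕ} {ε t : ℝ} (hh : 2 ≤ h) (hN : 0 < N) (hε0 : 0 < ε)
    (hε1 : ε < 1) (ht : 0 < t)
    (P : Fin N → Matrix (Fin h) (Fin h) ℝ) (hP : ∀ u, IsStochastic (P u))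
    (hdiagcover : ∀ i : Fin h, (i : ℕ) ≠ h - 1 → ∃ u, 0 < P u i i) :
    ∃ β : ℝ, 0 < β ∧ ∀ Q : Matrix (Fin h) (Fin h) ℝ, InLambda ε Q →
      (∀ u s r, 0 < P u s r → 0 < mexp (t • Q) s r) → ∀ i, β ≤ Shat P t Q i := by
  have hexist : ∀ i : Fin h, ∃ b : ℝ, 0 < b ∧ ∀ Q : Matrix (Fin h) (Fin h) ℝ, InLambda ε Q →
      (∀ u s r, 0 < P u s r → 0 < mexp (t • Q) s r) → b ≤ Shat P t Q i := by
    intro i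
    by_cases hi : (i : ℕ) = h - 1
    · obtain ⟨b, hb, hball⟩ := shat_ge_last hh hN hε0 hε1 ht P hP
      have hieq : i = (⟨h - 1, by omega⟩ : Fin h) := Fin.ext hi
      exact ⟨b, hb, fun Q hQ hws => by rw [hieq]; exact hball Q hQ hws⟩
    · obtain ⟨u, hu⟩ := hdiagcover i hi
      exact ⟨P u i i * (t * Real.exp (-(t * cc h ε))), by positivity,
        fun Q hQ hws => shat_ge_diag hε0 ht P hP u i hu hQ (hws u i i hu)⟩
  choose b hb hball using hexist
  have hne : (Finset.univ : Finset (Fin h)).Nonempty :=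
    ⟨⟨0, by omega⟩, Finset.mem_univ _⟩
  refine ⟨Finset.univ.inf' hne b, ?_, ?_⟩
  · rw [Finset.lt_inf'_iff]
    exact fun i _ => hb i
  · intro Q hQ hws i
    exact le_trans (Finset.inf'_le _ (Finset.mem_univ i)) (hball i Q hQ hws)

end EMUnif


/-- Theorem 2.4, forcing inequality for the EM iteration: along a sequence of EM updates
staying in `Λ_ε`, there is a `λ > 0` with
`R(Q^{(k+1)};Q^{(k)}) − R(Q^{(k)};Q^{(k)}) ≥ λ·‖Q^{(k+1)} − Q^{(k)}‖²`
(for the Frobenius norm). -/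
theorem em_forcing_inequality {h N : ℕ} (ε : ℝ) (hε0 : 0 < ε) (hε1 : ε < 1)
    (t : ℝ) (ht : 0 < t)
    (P : Fin N → Matrix (Fin h) (Fin h) ℝ) (hP : ∀ u, IsStochastic (P u))
    (Qs : ℕ → Matrix (Fin h) (Fin h) ℝ)
    (hlam : ∀ k, InLambda ε (Qs k))
    (hspec : ∀ k, ∀ u s r, 0 < P u s r → 0 < mexp (t • Qs k) s r)
    (hEM : ∀ k, ∀ i j, i ≠ j → 0 < Qs k i j →
      Qs (k + 1) i j = Jhat P t (Qs k) i j / Shat P t (Qs k) i)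
    (hzero : ∀ k, ∀ i j, i ≠ j → Qs 0 i j = 0 → Qs k i j = 0)
    (hcover : ∀ i j, i ≠ j → 0 < Qs 0 i j → ∃ u, 0 < P u i j)
    (hdiagcover : ∀ i : Fin h, (i : ℕ) ≠ h - 1 → ∃ u, 0 < P u i i) :
    ∃ lam > 0, ∀ k : ℕ,
      lam * ∑ i, ∑ j, (Qs (k + 1) i j - Qs k i j) ^ 2 ≤
        Rfun P t (Qs (k + 1)) (Qs k) - Rfun P t (Qs k) (Qs k) := by
  rcases Nat.lt_or_ge h 2 with hh2 | hh2
  · -- degenerate case `h ≤ 1`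
    refine ⟨1, one_pos, fun k => ?_⟩
    have hz : ∀ (m : ℕ) (i j : Fin h), Qs m i j = 0 := by
      intro m i j
      have hij : j = i := Fin.ext (by omega)
      subst hij
      have hrow := (hlam m).1.2.2 j
      have huniv : (Finset.univ : Finset (Fin h)) = {j} :=
        Finset.eq_singleton_iff_unique_mem.mpr
          ⟨Finset.mem_univ j, fun x _ => Fin.ext (by omega)⟩
      rw [huniv, Finset.sum_singleton] at hrow
      exact hrow
    have hR1 : Rfun P t (Qs (k + 1)) (Qs k) = 0 := by
      unfold Rfun
      refine Finset.sum_eq_zero fun i _ => Finset.sum_eq_zero fun j _ => ?_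
      rw [if_neg]
      rintro ⟨-, hpos⟩
      rw [hz (k + 1) i j] at hpos
      exact lt_irrefl 0 hpos
    have hR2 : Rfun P t (Qs k) (Qs k) = 0 := by
      unfold Rfun
      refine Finset.sum_eq_zero fun i _ => Finset.sum_eq_zero fun j _ => ?_
      rw [if_neg]
      rintro ⟨-, hpos⟩
      rw [hz k i j] at hpos
      exact lt_irrefl 0 hpos
    rw [hR1, hR2]
    have hzz : ∀ i j : Fin h, (Qs (k + 1) i j - Qs k i j) ^ 2 = 0 := by
      intro i j
      rw [hz (k + 1) i j, hz k i j]
      ring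
    have : ∑ i, ∑ j, (Qs (k + 1) i j - Qs k i j) ^ 2 = 0 := by
      refine Finset.sum_eq_zero fun i _ => Finset.sum_eq_zero fun j _ => hzz i j
    rw [this]
    norm_num
  rcases Nat.eq_zero_or_pos N with hN0 | hN
  · -- `N = 0` contradicts the EM recursion staying in `Λ_ε`
    exfalso
    subst hN0
    have hne : (⟨0, by omega⟩ : Fin h) ≠ ⟨1, by omega⟩ := by simp [Fin.ext_iff]
    have h01 := (hlam 0).2.2.2 hh2
    have hEM0 := hEM 0 _ _ hne (lt_trans hε0 h01)
    have hJ0 : Jhat P t (Qs 0) ⟨0, by omega⟩ ⟨1, by omega⟩ = 0 := by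
      unfold Jhat
      simp
    have hS0 : Shat P t (Qs 0) ⟨0, by omega⟩ = 0 := by
      unfold Shat
      simp
    rw [hJ0, hS0] at hEM0
    have h11 := (hlam 1).2.2.2 hh2
    rw [hEM0] at h11
    simp at h11
    linarith
  -- main case
  obtain ⟨β, hβ0, hβ⟩ := EMUnif.shat_uniform hh2 hN hε0 hε1 ht P hP hdiagcover
  have hPpos : ∀ (k : ℕ) (i j : Fin h), i ≠ j → 0 < Qs 0 i j → 0 < Qs k i j := by
    intro k
    induction k with
    | zero => exact fun i j _ h0 => h0
    | succ k ih =>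
      intro i j hij h0
      have hq := ih i j hij h0
      obtain ⟨u, hu⟩ := hcover i j hij h0
      have hJ := EMShat.jhat_pos hε0 ht P hP u i j hij (hlam k) hq hu (hspec k u i j hu)
      have hS : 0 < Shat P t (Qs k) i := lt_of_lt_of_le hβ0 (hβ (Qs k) (hlam k) (hspec k) i)
      rw [hEM k i j hij hq]
      exact div_pos hJ hS
  have hhR : (0:ℝ) < (h:ℝ) := by
    have : 0 < h := by omega
    exact_mod_cast this
  refine ⟨β * ε / (4 * h), by positivity, fun k => ?_⟩
  set D : Fin h → Fin h → ℝ := fun i j => Qs (k + 1) i j - Qs k i j with hD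
  have hentry : ∀ i j : Fin h, i ≠ j →
      β * ε / 4 * D i j ^ 2 ≤
        ((if i ≠ j ∧ 0 < Qs (k + 1) i j then
            Real.log (Qs (k + 1) i j) * Jhat P t (Qs k) i j -
              Qs (k + 1) i j * Shat P t (Qs k) i
          else 0) -
         (if i ≠ j ∧ 0 < Qs k i j then
            Real.log (Qs k i j) * Jhat P t (Qs k) i j - Qs k i j * Shat P t (Qs k) i
          else 0)) := by
    intro i j hij
    by_cases h0 : 0 < Qs 0 i j
    · have hq := hPpos k i j hij h0
      have hq' := hPpos (k + 1) i j hij h0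
      rw [if_pos ⟨hij, hq'⟩, if_pos ⟨hij, hq⟩]
      have hS := hβ (Qs k) (hlam k) (hspec k) i
      have hSpos : 0 < Shat P t (Qs k) i := lt_of_lt_of_le hβ0 hS
      have hJeq : Jhat P t (Qs k) i j = Qs (k + 1) i j * Shat P t (Qs k) i := by
        rw [hEM k i j hij hq]
        field_simp
      have hkey := EMKey.key1d ε (Shat P t (Qs k) i) (Qs k i j) (Qs (k + 1) i j)
        (Jhat P t (Qs k) i j) hε0 hSpos hq hq'
        ((hlam k).2.1 i j hij) ((hlam (k + 1)).2.1 i j hij) hJeq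
      have hmono : β * ε / 4 * D i j ^ 2 ≤ Shat P t (Qs k) i * ε / 4 * D i j ^ 2 := by
        have h4 : 0 ≤ D i j ^ 2 := sq_nonneg _
        have h5 : β * ε ≤ Shat P t (Qs k) i * ε := mul_le_mul_of_nonneg_right hS hε0.le
        have h6 : β * ε / 4 ≤ Shat P t (Qs k) i * ε / 4 := by linarith
        exact mul_le_mul_of_nonneg_right h6 h4
      calc β * ε / 4 * D i j ^ 2 ≤ Shat P t (Qs k) i * ε / 4 * D i j ^ 2 := hmono
      _ = Shat P t (Qs k) i * ε / 4 * (Qs (k + 1) i j - Qs k i j) ^ 2 := by rw [hD]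
      _ ≤ _ := hkey
    · have hq0 : Qs 0 i j = 0 := le_antisymm (not_lt.mp h0) ((hlam 0).1.1 i j hij)
      have hk := hzero k i j hij hq0
      have hk1 := hzero (k + 1) i j hij hq0
      have hDz : D i j = 0 := by rw [hD]; dsimp only; rw [hk, hk1]; ring
      rw [hDz, hk, hk1]
      simp
  have hrowD : ∀ i, D i i = -∑ j ∈ Finset.univ.erase i, D i j := by
    intro i
    have h1 : ∑ j, D i j = 0 := by
      rw [hD]
      dsimp only
      rw [Finset.sum_sub_distrib, (hlam (k + 1)).1.2.2 i, (hlam k).1.2.2 i]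
      ring
    have h2 : D i i + ∑ j ∈ Finset.univ.erase i, D i j = 0 := by
      rw [Finset.add_sum_erase _ _ (Finset.mem_univ i)]
      exact h1
    linarith
  have hcard : ∀ i : Fin h, (((Finset.univ.erase i).card : ℕ) : ℝ) = (h:ℝ) - 1 := by
    intro i
    rw [Finset.card_erase_of_mem (Finset.mem_univ i), Finset.card_univ, Fintype.card_fin]
    have h1 : 1 ≤ h := by omega
    push_cast [Nat.cast_sub h1]
    ring
  have hA : ∀ i, ∑ j, D i j ^ 2 ≤ (h:ℝ) * ∑ j ∈ Finset.univ.erase i, D i j ^ 2 := by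
    intro i
    have hcs := sq_sum_le_card_mul_sum_sq (s := Finset.univ.erase i) (f := fun j => D i j)
    rw [hcard i] at hcs
    have h1 : D i i ^ 2 ≤ ((h:ℝ) - 1) * ∑ j ∈ Finset.univ.erase i, D i j ^ 2 := by
      rw [hrowD i, neg_pow]
      simpa using hcs
    have h2 : ∑ j, D i j ^ 2 = D i i ^ 2 + ∑ j ∈ Finset.univ.erase i, D i j ^ 2 :=
      (Finset.add_sum_erase _ _ (Finset.mem_univ i)).symm
    have h3 : 0 ≤ ∑ j ∈ Finset.univ.erase i, D i j ^ 2 :=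
      Finset.sum_nonneg fun j _ => sq_nonneg _
    have h4 : ((h:ℝ) - 1) * (∑ j ∈ Finset.univ.erase i, D i j ^ 2) +
        ∑ j ∈ Finset.univ.erase i, D i j ^ 2 = (h:ℝ) * ∑ j ∈ Finset.univ.erase i, D i j ^ 2 := by
      ring
    linarith
  have hsum2 : ∑ i, ∑ j, D i j ^ 2 ≤ (h:ℝ) * ∑ i, ∑ j ∈ Finset.univ.erase i, D i j ^ 2 := by
    calc ∑ i, ∑ j, D i j ^ 2 ≤ ∑ i, (h:ℝ) * ∑ j ∈ Finset.univ.erase i, D i j ^ 2 :=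
          Finset.sum_le_sum fun i _ => hA i
    _ = (h:ℝ) * ∑ i, ∑ j ∈ Finset.univ.erase i, D i j ^ 2 := by rw [Finset.mul_sum]
  have hstep : β * ε / 4 * ∑ i, ∑ j ∈ Finset.univ.erase i, D i j ^ 2 ≤
      Rfun P t (Qs (k + 1)) (Qs k) - Rfun P t (Qs k) (Qs k) := by
    have hRdiff : Rfun P t (Qs (k + 1)) (Qs k) - Rfun P t (Qs k) (Qs k) =
        ∑ i, ∑ j,
          ((if i ≠ j ∧ 0 < Qs (k + 1) i j then
              Real.log (Qs (k + 1) i j) * Jhat P t (Qs k) i j -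
                Qs (k + 1) i j * Shat P t (Qs k) i
            else 0) -
           (if i ≠ j ∧ 0 < Qs k i j then
              Real.log (Qs k i j) * Jhat P t (Qs k) i j - Qs k i j * Shat P t (Qs k) i
            else 0)) := by
      unfold Rfun
      rw [← Finset.sum_sub_distrib]
      exact Finset.sum_congr rfl fun i _ => (Finset.sum_sub_distrib _ _).symm
    rw [hRdiff, Finset.mul_sum]
    refine Finset.sum_le_sum fun i _ => ?_
    rw [Finset.mul_sum]
    have hdiagzero :
        ((if i ≠ i ∧ 0 < Qs (k + 1) i i then
            Real.log (Qs (k + 1) i i) * Jhat P t (Qs k) i i -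
              Qs (k + 1) i i * Shat P t (Qs k) i
          else 0) -
         (if i ≠ i ∧ 0 < Qs k i i then
            Real.log (Qs k i i) * Jhat P t (Qs k) i i - Qs k i i * Shat P t (Qs k) i
          else 0)) = 0 := by
      rw [if_neg (fun hc => hc.1 rfl), if_neg (fun hc => hc.1 rfl)]
      ring
    calc ∑ j ∈ Finset.univ.erase i, β * ε / 4 * D i j ^ 2
        ≤ ∑ j ∈ Finset.univ.erase i,
          ((if i ≠ j ∧ 0 < Qs (k + 1) i j then
              Real.log (Qs (k + 1) i j) * Jhat P t (Qs k) i j -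
                Qs (k + 1) i j * Shat P t (Qs k) i
            else 0) -
           (if i ≠ j ∧ 0 < Qs k i j then
              Real.log (Qs k i j) * Jhat P t (Qs k) i j - Qs k i j * Shat P t (Qs k) i
            else 0)) :=
          Finset.sum_le_sum fun j hj =>
            hentry i j (Ne.symm (Finset.mem_erase.mp hj).1)
    _ = ∑ j,
          ((if i ≠ j ∧ 0 < Qs (k + 1) i j then
              Real.log (Qs (k + 1) i j) * Jhat P t (Qs k) i j -
                Qs (k + 1) i j * Shat P t (Qs k) i
            else 0) -
           (if i ≠ j ∧ 0 < Qs k i j then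
              Real.log (Qs k i j) * Jhat P t (Qs k) i j - Qs k i j * Shat P t (Qs k) i
            else 0)) := by
        rw [← Finset.add_sum_erase _ _ (Finset.mem_univ i), hdiagzero, zero_add]
  have hfinal : β * ε / (4 * (h:ℝ)) * ((h:ℝ) * ∑ i, ∑ j ∈ Finset.univ.erase i, D i j ^ 2) =
      β * ε / 4 * ∑ i, ∑ j ∈ Finset.univ.erase i, D i j ^ 2 := by
    field_simp
  calc β * ε / (4 * (h:ℝ)) * ∑ i, ∑ j, (Qs (k + 1) i j - Qs k i j) ^ 2
      = β * ε / (4 * (h:ℝ)) * ∑ i, ∑ j, D i j ^ 2 := by rw [hD]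
  _ ≤ β * ε / (4 * (h:ℝ)) * ((h:ℝ) * ∑ i, ∑ j ∈ Finset.univ.erase i, D i j ^ 2) :=
      mul_le_mul_of_nonneg_left hsum2 (by positivity)
  _ = β * ε / 4 * ∑ i, ∑ j ∈ Finset.univ.erase i, D i j ^ 2 := hfinal
  _ ≤ _ := hstep
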